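/- There exists T₇ ≥ T₃ such that for all t ≥ T₇ one has F₂'(t) · (F₁'(t) + F₁(t)) ≥ (k₄/(2(q+1))) e^{-β₃ t} (t+R)^{-β₂} F₁(t)^{q+1}. -/

import Mathlib

open Real Set Filter

/-!
Put `w t = k₄ e^{-β₃ t} (t + R)^{-β₂}`, a nonincreasing weight, and
`H = F₂' (F₁' + F₁) - w F₁^{q+1} / (2 (q + 1))`. From `F₂'' ≥ w F₁^q`, `F₁'' + F₁' ≥ 0` and
`w' ≤ 0` one gets `H' ≥ w F₁^{q+1} ≥ 0`, so `H` is nondecreasing and it suffices to find a single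
time at which `H ≥ 0`. If `H < 0` on `[a, ∞)`, then `F₂' F₁ < w F₁^{q+1} / (2 (q + 1))`, hence
`H' ≥ w F₁^q F₁(a) ≥ 2 (q + 1) F₁(a) F₂'`; thus `H - 2 (q + 1) F₁(a) F₂` is nondecreasing and
`F₂` stays bounded, contradicting `F₂ ≥ k₃ (t + R)^{β₁} → ∞`.
-/

lemma ContDiffOn.hasDerivAt_deriv_and_deriv_deriv {f : ℝ → ℝ} {a t : ℝ}
    (hf : ContDiffOn ℝ 2 f (Ici a)) (ht : a < t) :
    HasDerivAt f (deriv f t) t ∧ HasDerivAt (deriv f) (deriv (deriv f) t) t := by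
  have hf' : ContDiffOn ℝ 2 f (Ioi a) := hf.mono Ioi_subset_Ici_self
  have hnhds : Ioi a ∈ nhds t := isOpen_Ioi.mem_nhds ht
  exact ⟨((hf'.differentiableOn (by norm_num)).differentiableAt hnhds).hasDerivAt,
    (((hf'.deriv_of_isOpen isOpen_Ioi (by norm_num : (1 : WithTop ℕ∞) + 1 ≤ 2)).differentiableOn
      (by norm_num)).differentiableAt hnhds).hasDerivAt⟩

lemma monotoneOn_Ici_of_deriv_nonneg {f : ℝ → ℝ} {a : ℝ}
    (hf : ∀ t ∈ Ici a, DifferentiableAt ℝ f t) (hf' : ∀ t ∈ Ici a, 0 ≤ deriv f t) :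
    MonotoneOn f (Ici a) :=
  monotoneOn_of_deriv_nonneg (convex_Ici a) (fun t ht => (hf t ht).continuousAt.continuousWithinAt)
    (fun t ht => (hf t (interior_subset ht)).differentiableWithinAt)
    (fun t ht => hf' t (interior_subset ht))

lemma exists_forall_ge_nonneg_of_deriv_le_deriv {H G : ℝ → ℝ} {a : ℝ}
    (hH : ∀ t ∈ Ici a, DifferentiableAt ℝ H t) (hG : ∀ t ∈ Ici a, DifferentiableAt ℝ G t)
    (hH' : ∀ t ∈ Ici a, 0 ≤ deriv H t) (hGH : ∀ t ∈ Ici a, H t < 0 → deriv G t ≤ deriv H t)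
    (hG_top : Tendsto G atTop atTop) :
    ∃ T ≥ a, ∀ t ≥ T, 0 ≤ H t := by
  by_cases hpos : ∃ T ∈ Ici a, 0 ≤ H T
  · obtain ⟨T, hT, hHT⟩ := hpos
    exact ⟨T, hT, fun t ht => hHT.trans
      (monotoneOn_Ici_of_deriv_nonneg hH hH' hT (mem_Ici.2 (le_trans hT ht)) ht)⟩
  push Not at hpos
  have hmono : MonotoneOn (fun t => H t - G t) (Ici a) :=
    monotoneOn_Ici_of_deriv_nonneg (fun t ht => (hH t ht).sub (hG t ht)) fun t ht => by
      rw [deriv_fun_sub (hH t ht) (hG t ht)]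
      linarith [hGH t ht (hpos t ht)]
  obtain ⟨t, hta, ht⟩ := ((eventually_ge_atTop a).and
    (hG_top.eventually_gt_atTop (G a - H a))).exists
  have := hmono self_mem_Ici (mem_Ici.2 hta) hta
  linarith [hpos t (mem_Ici.2 hta)]

lemma hasDerivAt_mul_exp_mul_rpow {k β γ R t : ℝ} (ht : 0 < t + R) :
    HasDerivAt (fun s => k * exp (-β * s) * (s + R) ^ (-γ))
      (-(β + γ / (t + R)) * (k * exp (-β * t) * (t + R) ^ (-γ))) t := by
  have hexp : HasDerivAt (fun s => exp (-β * s)) (exp (-β * t) * -β) t := by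
    simpa using ((hasDerivAt_id t).const_mul (-β)).exp
  have hpow : HasDerivAt (fun s => (s + R) ^ (-γ)) (-γ * (t + R) ^ (-γ - 1)) t := by
    simpa using ((hasDerivAt_id t).add_const R).rpow_const (p := -γ) (Or.inl ht.ne')
  refine ((hexp.const_mul k).mul hpow).congr_deriv ?_
  rw [rpow_sub_one ht.ne']
  field_simp
  ring

/-- The functional `H` of the proof, with `u = F₁`, `u₁ = F₁'`, `v = F₂'` and
`w t = k₄ e^{-β₃ t} (t + R)^{-β₂}`. -/
noncomputable def energy (q : ℝ) (u u₁ v w : ℝ → ℝ) (t : ℝ) : ℝ :=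
  v t * (u₁ t + u t) - w t / (2 * (q + 1)) * u t ^ (q + 1)

lemma exists_hasDerivAt_energy_ge {q t u₁' v' w' : ℝ} {u u₁ v w : ℝ → ℝ} (hq : 0 < q + 1)
    (hu : HasDerivAt u (u₁ t) t) (hu₁ : HasDerivAt u₁ u₁' t) (hv : HasDerivAt v v' t)
    (hw : HasDerivAt w w' t) (hut : 0 < u t) (hu₁t : 0 ≤ u₁ t) (hvt : 0 ≤ v t) (hwt : 0 ≤ w t)
    (hw' : w' ≤ 0) (hu₁' : 0 ≤ u₁' + u₁ t) (hv' : w t * u t ^ q ≤ v') :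
    ∃ e, HasDerivAt (energy q u u₁ v w) e t ∧ w t * u t ^ (q + 1) ≤ e := by
  have hpow : HasDerivAt (fun s => u s ^ (q + 1)) (u₁ t * (q + 1) * u t ^ q) t := by
    simpa using hu.rpow_const (p := q + 1) (Or.inl hut.ne')
  refine ⟨_, (hv.mul (hu₁.add hu)).sub ((hw.div_const _).mul hpow), ?_⟩
  have hX : 0 ≤ w t * u t ^ q := mul_nonneg hwt (rpow_nonneg hut.le q)
  have hw'X : w' / (2 * (q + 1)) * u t ^ (q + 1) ≤ 0 :=
    mul_nonpos_of_nonpos_of_nonneg (div_nonpos_of_nonpos_of_nonneg hw' (by positivity))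
      (by positivity)
  rw [rpow_add_one hut.ne'] at hw'X ⊢
  have hsplit : w t / (2 * (q + 1)) * (u₁ t * (q + 1) * u t ^ q) = w t * u t ^ q * u₁ t / 2 := by
    field_simp
  simp only [Pi.add_apply]
  nlinarith [mul_le_mul_of_nonneg_right hv' (add_nonneg hu₁t hut.le), mul_nonneg hvt hu₁',
    mul_nonneg hX hu₁t]

lemma mul_le_of_energy_neg {q κ t : ℝ} {u u₁ v w : ℝ → ℝ} (hq : 0 < q + 1) (hκ : 0 < κ)
    (hκu : κ ≤ u t) (hu₁t : 0 ≤ u₁ t) (hvt : 0 ≤ v t) (hwt : 0 ≤ w t)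
    (hE : energy q u u₁ v w t < 0) :
    2 * (q + 1) * κ * v t ≤ w t * u t ^ (q + 1) := by
  have hut : 0 < u t := hκ.trans_le hκu
  rw [energy, rpow_add_one hut.ne'] at hE
  rw [rpow_add_one hut.ne']
  have hX : 0 ≤ w t * u t ^ q := mul_nonneg hwt (rpow_nonneg hut.le q)
  have hvu : v t * u t < w t * u t ^ q / (2 * (q + 1)) * u t := by
    have : w t / (2 * (q + 1)) * (u t ^ q * u t) = w t * u t ^ q / (2 * (q + 1)) * u t := by ring
    nlinarith [mul_nonneg hvt hu₁t]
  have hvX : 2 * (q + 1) * v t ≤ w t * u t ^ q := by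
    rw [mul_comm, ← le_div_iff₀ (by positivity)]
    exact (lt_of_mul_lt_mul_right hvu hut.le).le
  nlinarith [mul_le_mul_of_nonneg_right hvX hκ.le, mul_le_mul_of_nonneg_left hκu hX]

lemma exists_forall_ge_energy_nonneg {q a : ℝ} {u u₁ u₂ v v₁ v₂ w w₁ : ℝ → ℝ} (hq : 0 < q + 1)
    (hu : ∀ t ∈ Ici a, HasDerivAt u (u₁ t) t) (hu₁ : ∀ t ∈ Ici a, HasDerivAt u₁ (u₂ t) t)
    (hv : ∀ t ∈ Ici a, HasDerivAt v (v₁ t) t) (hv₁ : ∀ t ∈ Ici a, HasDerivAt v₁ (v₂ t) t)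
    (hw : ∀ t ∈ Ici a, HasDerivAt w (w₁ t) t)
    (hu_pos : ∀ t ∈ Ici a, 0 < u t) (hu₁_nonneg : ∀ t ∈ Ici a, 0 ≤ u₁ t)
    (hu₂ : ∀ t ∈ Ici a, 0 ≤ u₂ t + u₁ t) (hv₁_nonneg : ∀ t ∈ Ici a, 0 ≤ v₁ t)
    (hv₂ : ∀ t ∈ Ici a, w t * u t ^ q ≤ v₂ t) (hw_nonneg : ∀ t ∈ Ici a, 0 ≤ w t)
    (hw₁ : ∀ t ∈ Ici a, w₁ t ≤ 0) (hv_top : Tendsto v atTop atTop) :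
    ∃ T ≥ a, ∀ t ≥ T, 0 ≤ energy q u u₁ v₁ w t := by
  have hE (t : ℝ) (ht : t ∈ Ici a) :
      ∃ e, HasDerivAt (energy q u u₁ v₁ w) e t ∧ w t * u t ^ (q + 1) ≤ e :=
    exists_hasDerivAt_energy_ge hq (hu t ht) (hu₁ t ht) (hv₁ t ht) (hw t ht) (hu_pos t ht)
      (hu₁_nonneg t ht) (hv₁_nonneg t ht) (hw_nonneg t ht) (hw₁ t ht) (hu₂ t ht) (hv₂ t ht)
  have hu_mono : MonotoneOn u (Ici a) := monotoneOn_Ici_of_deriv_nonneg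
    (fun t ht => (hu t ht).differentiableAt) fun t ht => (hu t ht).deriv ▸ hu₁_nonneg t ht
  have hC : 0 < 2 * (q + 1) * u a := mul_pos (by positivity) (hu_pos a self_mem_Ici)
  refine exists_forall_ge_nonneg_of_deriv_le_deriv (G := fun s => 2 * (q + 1) * u a * v s)
    (fun t ht => (hE t ht).choose_spec.1.differentiableAt)
    (fun t ht => ((hv t ht).const_mul _).differentiableAt) (fun t ht => ?_) (fun t ht hneg => ?_)
    (hv_top.const_mul_atTop hC)
  · obtain ⟨e, he, hle⟩ := hE t ht
    have := hu_pos t ht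
    rw [he.deriv]
    exact (mul_nonneg (hw_nonneg t ht) (by positivity)).trans hle
  · obtain ⟨e, he, hle⟩ := hE t ht
    rw [he.deriv, ((hv t ht).const_mul _).deriv]
    exact (mul_le_of_energy_neg hq (hu_pos a self_mem_Ici) (hu_mono self_mem_Ici ht ht)
      (hu₁_nonneg t ht) (hv₁_nonneg t ht) (hw_nonneg t ht) hneg).trans hle

theorem stmt_5_general
    (p q α₁ α₂ β₁ β₂ β₃ k₀ k₂ k₃ k₄ R T₃ : ℝ)
    (hq : 1 < q)
    (hβ₂ : 0 ≤ β₂) (hβ₃ : 0 ≤ β₃)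
    (hβ₁ : 0 < β₁)
    (hk₀ : 0 < k₀) (hk₂ : 0 < k₂) (hk₃ : 0 < k₃) (hk₄ : 0 < k₄)
    (hR : 0 < R) (hT₃ : 0 < T₃)
    (F₁ F₂ : ℝ → ℝ)
    (hF₁ : ContDiffOn ℝ 2 F₁ (Ici T₃)) (hF₂ : ContDiffOn ℝ 2 F₂ (Ici T₃))
    (h1 : ∀ t, T₃ ≤ t → k₀ * (t + R) ^ α₁ ≤ F₁ t)
    (h1' : ∀ t, T₃ ≤ t → 0 ≤ deriv F₁ t)
    (h2 : ∀ t, T₃ ≤ t →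
      k₂ * (t + R) ^ (-α₂) * (F₂ t) ^ p ≤ deriv (deriv F₁) t + deriv F₁ t)
    (h3 : ∀ t, T₃ ≤ t → k₃ * (t + R) ^ β₁ ≤ F₂ t)
    (h3' : ∀ t, T₃ ≤ t → 0 ≤ deriv F₂ t)
    (h4 : ∀ t, T₃ ≤ t →
      k₄ * Real.exp (-β₃ * t) * (t + R) ^ (-β₂) * (F₁ t) ^ q ≤ deriv (deriv F₂) t) :
    ∃ T₇, T₃ ≤ T₇ ∧ ∀ t, T₇ ≤ t →
      k₄ / (2 * (q + 1)) * Real.exp (-β₃ * t) * (t + R) ^ (-β₂) * (F₁ t) ^ (q + 1) ≤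
        deriv F₂ t * (deriv F₁ t + F₁ t) := by
  have hD₁ := fun t (ht : T₃ < t) => hF₁.hasDerivAt_deriv_and_deriv_deriv ht
  have hD₂ := fun t (ht : T₃ < t) => hF₂.hasDerivAt_deriv_and_deriv_deriv ht
  have hlt (t : ℝ) (ht : t ∈ Ici (T₃ + 1)) : T₃ < t := by linarith [mem_Ici.1 ht]
  have hpos (t : ℝ) (ht : t ∈ Ici (T₃ + 1)) : 0 < t + R := by linarith [hlt t ht]
  have hF₁_pos (t : ℝ) (ht : t ∈ Ici (T₃ + 1)) : 0 < F₁ t :=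
    have := hpos t ht
    (by positivity : 0 < k₀ * (t + R) ^ α₁).trans_le (h1 t (hlt t ht).le)
  have hF₁_conv (t : ℝ) (ht : t ∈ Ici (T₃ + 1)) : 0 ≤ deriv (deriv F₁) t + deriv F₁ t := by
    have := hpos t ht
    have : 0 ≤ F₂ t := (by positivity : 0 ≤ k₃ * (t + R) ^ β₁).trans (h3 t (hlt t ht).le)
    exact (by positivity : 0 ≤ k₂ * (t + R) ^ (-α₂) * F₂ t ^ p).trans (h2 t (hlt t ht).le)
  have hF₂_top : Tendsto F₂ atTop atTop :=
    tendsto_atTop_mono' _ ((eventually_ge_atTop T₃).mono h3) <|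
      ((tendsto_rpow_atTop hβ₁).comp (tendsto_atTop_add_const_right _ R tendsto_id)).const_mul_atTop
        hk₃
  obtain ⟨T, hT, hHT⟩ := exists_forall_ge_energy_nonneg (a := T₃ + 1) (by linarith)
    (fun t ht => (hD₁ t (hlt t ht)).1) (fun t ht => (hD₁ t (hlt t ht)).2)
    (fun t ht => (hD₂ t (hlt t ht)).1) (fun t ht => (hD₂ t (hlt t ht)).2)
    (fun t ht => hasDerivAt_mul_exp_mul_rpow (k := k₄) (β := β₃) (γ := β₂) (hpos t ht))
    hF₁_pos (fun t ht => h1' t (hlt t ht).le) hF₁_conv (fun t ht => h3' t (hlt t ht).le)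
    (fun t ht => h4 t (hlt t ht).le) (fun t ht => have := hpos t ht; by positivity)
    (fun t ht => have := hpos t ht; by rw [neg_mul]; exact neg_nonpos.2 (by positivity))
    hF₂_top
  refine ⟨T, by linarith, fun t ht => ?_⟩
  rw [← sub_nonneg]
  convert hHT t ht using 1
  simp only [energy]
  ring

/-- F₂'·(F₁' + F₁) lower bound for large times. -/
theorem stmt_5
    (p q α₁ α₂ β₁ β₂ β₃ k₀ k₂ k₃ k₄ R T₃ : ℝ)
    (hp : 1 < p) (hq : 1 < q)
    (hα₂ : 0 ≤ α₂) (hβ₂ : 0 ≤ β₂) (hβ₃ : 0 ≤ β₃)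
    (hα₁ : 0 < α₁) (hβ₁ : 0 < β₁)
    (hk₀ : 0 < k₀) (hk₂ : 0 < k₂) (hk₃ : 0 < k₃) (hk₄ : 0 < k₄)
    (hR : 0 < R) (hT₃ : 0 < T₃)
    (F₁ F₂ : ℝ → ℝ)
    (hF₁ : ContDiffOn ℝ 2 F₁ (Ici T₃)) (hF₂ : ContDiffOn ℝ 2 F₂ (Ici T₃))
    (h1 : ∀ t, T₃ ≤ t → k₀ * (t + R) ^ α₁ ≤ F₁ t)
    (h1' : ∀ t, T₃ ≤ t → 0 ≤ deriv F₁ t)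
    (h2 : ∀ t, T₃ ≤ t →
      k₂ * (t + R) ^ (-α₂) * (F₂ t) ^ p ≤ deriv (deriv F₁) t + deriv F₁ t)
    (h3 : ∀ t, T₃ ≤ t → k₃ * (t + R) ^ β₁ ≤ F₂ t)
    (h3' : ∀ t, T₃ ≤ t → 0 ≤ deriv F₂ t)
    (h4 : ∀ t, T₃ ≤ t →
      k₄ * Real.exp (-β₃ * t) * (t + R) ^ (-β₂) * (F₁ t) ^ q ≤ deriv (deriv F₂) t) :
    ∃ T₇, T₃ ≤ T₇ ∧ ∀ t, T₇ ≤ t →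
      k₄ / (2 * (q + 1)) * Real.exp (-β₃ * t) * (t + R) ^ (-β₂) * (F₁ t) ^ (q + 1) ≤
        deriv F₂ t * (deriv F₁ t + F₁ t) :=
  stmt_5_general p q α₁ α₂ β₁ β₂ β₃ k₀ k₂ k₃ k₄ R T₃ hq hβ₂ hβ₃ hβ₁ hk₀ hk₂ hk₃ hk₄ hR hT₃ F₁ F₂ hF₁
    hF₂ h1 h1' h2 h3 h3' h4
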